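/- arXiv:2406.10986 — 6 statements merged into one kernel-verified Lean document; each statement's English description precedes it below -/
import Mathlib

section
/- Let (X,d) be a metric space of Nagata dimension n with constant γ, and ω a distortion function. Then (X, ω∘d) is a metric space of Nagata dimension n with constant at most 2γ. -/
/-- `X` has Nagata dimension `n` with constant `γ` (with respect to the distance
function `d`): for every scale `s > 0` there is a cover by `n+1` families of sets,
each family `γs`-bounded and `s`-separated. -/
def NagataDimWith {X : Type*} (d : X → X → ℝ) (n : ℕ) (γ : ℝ) : Prop :=
  ∀ s : ℝ, 0 < s → ∃ B : Fin (n + 1) → Set (Set X),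
    (∀ x : X, ∃ i, ∃ b ∈ B i, x ∈ b) ∧
    (∀ i, ∀ b ∈ B i, ∀ x ∈ b, ∀ y ∈ b, d x y ≤ γ * s) ∧
    (∀ i, ∀ b ∈ B i, ∀ b' ∈ B i, b ≠ b' → ∀ x ∈ b, ∀ y ∈ b', s < d x y)

/-- If `(X,d)` has Nagata dimension `n` with constant `γ` and `ω` is a distortion
function, then `(X, ω ∘ d)` has Nagata dimension `n` with constant at most `2γ`. -/
theorem stmt_4 {X : Type*} [MetricSpace X] (ω : ℝ → ℝ)
    (hcont : ContinuousOn ω (Set.Ici 0)) (hconc : ConcaveOn ℝ (Set.Ici 0) ω)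
    (h0 : ω 0 = 0) (hpos : ∀ t : ℝ, 0 < t → 0 < ω t)
    (n : ℕ) (γ : ℝ) (hγ : 1 ≤ γ)
    (h : NagataDimWith (fun x y : X => dist x y) n γ) :
    NagataDimWith (fun x y : X => ω (dist x y)) n (2 * γ) := by
  have hγ0 : (0:ℝ) < γ := lt_of_lt_of_le one_pos hγ
  -- monotonicity of ω on [0,∞)
  have hmono : ∀ a b : ℝ, 0 ≤ a → a ≤ b → ω a ≤ ω b := by
    intro a b ha hab
    rcases eq_or_lt_of_le hab with rfl | hab
    · exact le_refl _
    by_contra hlt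
    push_neg at hlt
    have hδ : 0 < ω a - ω b := by linarith
    set Q : ℝ := (b * ω a - a * ω b) / (ω a - ω b) with hQ
    set c : ℝ := max b Q + 1 with hc
    have hcb : b < c := by have := le_max_left b Q; linarith
    have hcQ : Q ≤ c := by have := le_max_right b Q; linarith
    have hca : a < c := lt_of_lt_of_le hab hcb.le
    have hca' : (0:ℝ) < c - a := by linarith
    have hωc : 0 < ω c := hpos c (lt_of_le_of_lt ha hca)
    have hQc : b * ω a - a * ω b ≤ c * (ω a - ω b) := by
      rw [hQ] at hcQ
      exact (div_le_iff₀ hδ).mp hcQ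
    have hmem1 : a ∈ Set.Ici (0:ℝ) := ha
    have hmem2 : c ∈ Set.Ici (0:ℝ) := le_of_lt (lt_of_le_of_lt ha hca)
    have ha' : (0:ℝ) ≤ (c - b) / (c - a) := by
      apply div_nonneg <;> linarith
    have hb' : (0:ℝ) ≤ (b - a) / (c - a) := by
      apply div_nonneg <;> linarith
    have hab' : (c - b) / (c - a) + (b - a) / (c - a) = 1 := by
      field_simp; ring
    have key := hconc.2 hmem1 hmem2 ha' hb' hab'
    simp only [smul_eq_mul] at key
    have hcomb : (c - b) / (c - a) * a + (b - a) / (c - a) * c = b := by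
      field_simp
      ring
    rw [hcomb] at key
    have key2 : (c - b) * ω a + (b - a) * ω c ≤ (c - a) * ω b := by
      have heq : (c - b) / (c - a) * ω a + (b - a) / (c - a) * ω c
          = ((c - b) * ω a + (b - a) * ω c) / (c - a) := by field_simp; try ring
      rw [heq] at key
      have := (div_le_iff₀ hca').mp key
      linarith
    nlinarith [mul_pos (sub_pos.2 hab) hωc]
  -- concave scaling: ω (γ * t) ≤ γ * ω t
  have hscale : ∀ t : ℝ, 0 ≤ t → ω (γ * t) ≤ γ * ω t := by
    intro t ht
    have hmem1 : γ * t ∈ Set.Ici (0:ℝ) := Set.mem_Ici.mpr (by positivity)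
    have hmem2 : (0:ℝ) ∈ Set.Ici (0:ℝ) := Set.self_mem_Ici
    have ha' : (0:ℝ) ≤ 1 / γ := by positivity
    have hb' : (0:ℝ) ≤ 1 - 1 / γ := by
      have : 1 / γ ≤ 1 := by rw [div_le_one hγ0]; exact hγ
      linarith
    have hab' : 1 / γ + (1 - 1 / γ) = 1 := by ring
    have key := hconc.2 hmem1 hmem2 ha' hb' hab'
    simp only [smul_eq_mul, mul_zero, add_zero] at key
    rw [h0, mul_zero, add_zero] at key
    have hcomb : 1 / γ * (γ * t) = t := by field_simp
    rw [hcomb] at key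
    have := mul_le_mul_of_nonneg_left key hγ0.le
    calc ω (γ * t) = γ * (1 / γ * ω (γ * t)) := by field_simp
    _ ≤ γ * ω t := this
  intro s hs
  by_cases hcase : ∃ u : ℝ, 0 < u ∧ s < ω u
  · -- main case: pick t with ω t = s by IVT
    obtain ⟨u, hu, hsu⟩ := hcase
    have hIcc : Set.Icc (ω 0) (ω u) ⊆ ω '' Set.Icc 0 u :=
      intermediate_value_Icc hu.le (hcont.mono (fun x hx => hx.1))
    have hsmem : s ∈ Set.Icc (ω 0) (ω u) := ⟨by rw [h0]; exact hs.le, hsu.le⟩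
    obtain ⟨t, htIcc, hωt⟩ := hIcc hsmem
    have ht0 : 0 < t := by
      rcases eq_or_lt_of_le htIcc.1 with h' | h'
      · exfalso; rw [← h', h0] at hωt; linarith
      · exact h'
    have htu : t < u := by
      by_contra hle
      push_neg at hle
      have := hmono u t (le_of_lt hu) hle
      rw [hωt] at this
      linarith
    obtain ⟨B, hcov, hbdd, hsep⟩ := h t ht0
    refine ⟨B, hcov, ?_, ?_⟩
    · intro i b hb x hx y hy
      have hd := hbdd i b hb x hx y hy
      have h1 : ω (dist x y) ≤ ω (γ * t) := hmono _ _ dist_nonneg hd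
      have h2 : ω (γ * t) ≤ γ * ω t := hscale t ht0.le
      rw [hωt] at h2
      nlinarith
    · intro i b hb b' hb' hne x hx y hy
      have hd : t < dist x y := hsep i b hb b' hb' hne x hx y hy
      set d' : ℝ := min (dist x y) u with hd'
      have htd' : t < d' := lt_min hd htu
      have hd'u : d' ≤ u := min_le_right _ _
      have hut : (0:ℝ) < u - t := by linarith
      have ha' : (0:ℝ) ≤ (u - d') / (u - t) := by
        apply div_nonneg <;> linarith
      have hb'' : (0:ℝ) < (d' - t) / (u - t) := by
        apply div_pos <;> linarith
      have hab' : (u - d') / (u - t) + (d' - t) / (u - t) = 1 := by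
        field_simp; ring
      have hmem1 : t ∈ Set.Ici (0:ℝ) := ht0.le
      have hmem2 : u ∈ Set.Ici (0:ℝ) := hu.le
      have key := hconc.2 hmem1 hmem2 ha' hb''.le hab'
      simp only [smul_eq_mul] at key
      have hcomb : (u - d') / (u - t) * t + (d' - t) / (u - t) * u = d' := by
        field_simp; ring
      rw [hcomb, hωt] at key
      have hmd : ω d' ≤ ω (dist x y) := hmono d' (dist x y) (by linarith) (min_le_left _ _)
      nlinarith [mul_pos hb'' (sub_pos.2 hsu)]
  · -- degenerate case: ω is bounded by s
    push_neg at hcase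
    refine ⟨fun i => if i = 0 then {Set.univ} else ∅, ?_, ?_, ?_⟩
    · intro x
      exact ⟨0, Set.univ, by simp, trivial⟩
    · intro i b hb x _ y _
      have hbound : ω (dist x y) ≤ s := by
        rcases eq_or_lt_of_le (dist_nonneg (x := x) (y := y)) with h' | h'
        · rw [← h', h0]; linarith
        · exact hcase _ h'
      nlinarith
    · intro i b hb b' hb' hne x hx y hy
      by_cases hi : i = 0
      · simp [hi] at hb hb'
        exact absurd (hb.trans hb'.symm) hne
      · simp [hi] at hb
end

section
/- Let Z be a positive real-valued random variable, α > 0, and D ≥ 1 such that Z ≥ α almost surely and E[log Z] ≤ log(Dα). Then for every β ≥ 0, E[log(Z + β)] ≤ log(D(α + β)). -/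
open MeasureTheory

/-- If `Z ≥ α > 0` a.s. and `E[log Z] ≤ log(Dα)` with `D ≥ 1`, then for all `β ≥ 0`,
`E[log(Z + β)] ≤ log(D(α + β))`. -/
theorem stmt_6 {Ω : Type*} [MeasurableSpace Ω] (μ : Measure Ω) [IsProbabilityMeasure μ]
    (Z : Ω → ℝ) (hZ : Measurable Z) (α : ℝ) (hα : 0 < α) (D : ℝ) (hD : 1 ≤ D)
    (hZα : ∀ᵐ x ∂μ, α ≤ Z x)
    (hint : Integrable (fun x => Real.log (Z x)) μ)
    (hlog : ∫ x, Real.log (Z x) ∂μ ≤ Real.log (D * α)) :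
    ∀ β : ℝ, 0 ≤ β → ∫ x, Real.log (Z x + β) ∂μ ≤ Real.log (D * (α + β)) := by
  intro β hβ
  set c : ℝ := Real.log ((α + β) / α) with hc
  have hc0 : 0 ≤ c := Real.log_nonneg (by
    rw [le_div_iff₀ hα]; linarith)
  -- pointwise: log Z ≤ log (Z + β) ≤ log Z + c when α ≤ Z
  have hpt : ∀ᵐ x ∂μ, Real.log (Z x) ≤ Real.log (Z x + β) ∧
      Real.log (Z x + β) ≤ Real.log (Z x) + c := by
    filter_upwards [hZα] with x hx
    have hZpos : 0 < Z x := lt_of_lt_of_le hα hx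
    constructor
    · exact Real.log_le_log (by linarith) (by linarith)
    · have h1 : Z x + β ≤ Z x * ((α + β) / α) := by
        rw [← mul_div_assoc, le_div_iff₀ hα]
        nlinarith
      calc Real.log (Z x + β) ≤ Real.log (Z x * ((α + β) / α)) :=
            Real.log_le_log (by linarith) h1
        _ = Real.log (Z x) + c := by
            rw [Real.log_mul (ne_of_gt hZpos) (by positivity)]
  -- integrability
  have hintb : Integrable (fun x => Real.log (Z x + β)) μ := by
    apply Integrable.mono' (hint.abs.add (integrable_const c))
    · exact ((hZ.add_const β).log).aestronglyMeasurable
    · filter_upwards [hpt] with x ⟨h1, h2⟩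
      simp only [Pi.add_apply, Real.norm_eq_abs, abs_le]
      constructor
      · have := neg_abs_le (Real.log (Z x)); linarith
      · have := le_abs_self (Real.log (Z x)); linarith
  have hint2 : ∫ x, Real.log (Z x + β) ∂μ ≤ ∫ x, Real.log (Z x) + c ∂μ := by
    apply integral_mono_ae hintb (hint.add (integrable_const c))
    filter_upwards [hpt] with x ⟨_, h2⟩ using h2
  rw [integral_add hint (integrable_const c), integral_const, probReal_univ,
    smul_eq_mul, one_mul] at hint2
  have key : Real.log (D * α) + c = Real.log (D * (α + β)) := by
    rw [hc, ← Real.log_mul (by positivity) (by positivity)]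
    congr 1
    field_simp
  linarith
end

section
/- Let N be a set, k : N → ℤ a function x ↦ k_x, and k(·,·) : N × N → ℤ symmetric with k(x,y) ≥ max{k_x, k_y}, k(x,x) = k_x, and k(x,z) ≤ max{k(x,y), k(y,z)} for all x,y,z. Then ρ(x,y) := 2k(x,y) − k_x − k_y defines a metric on N satisfying the four-point condition ρ(w,x) + ρ(y,z) ≤ max{ρ(w,y) + ρ(x,z), ρ(w,z) + ρ(x,y)} (i.e., ρ is 0-hyperbolic). -/
/-!
The terms `k_x` cancel from both sides of the four-point condition for `ρ`, which therefore
reduces to the four-point condition `k(w,x) + k(y,z) ≤ max {k(w,y) + k(x,z), k(w,z) + k(x,y)}`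
for `k` itself; this holds for every symmetric `k` satisfying the ultrametric inequality, by
bounding each of `k(w,x)` and `k(y,z)` by two maxima and comparing the resulting cases.
The triangle inequality is the four-point condition with a repeated point.
-/

section

variable {N : Type*}

theorem four_point_of_le_max (k : N → N → ℤ) (hsymm : ∀ x y : N, k x y = k y x)
    (hultra : ∀ x y z : N, k x z ≤ max (k x y) (k y z)) (w x y z : N) :
    k w x + k y z ≤ max (k w y + k x z) (k w z + k x y) := by
  have hwx₁ := hultra w y x
  have hwx₂ := hultra w z x
  have hyz₁ := hultra y x z
  have hyz₂ := hultra y w z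
  rw [hsymm y x, hsymm z x] at *
  rw [hsymm y w] at hyz₂
  simp only [le_max_iff] at *
  omega

def rho (kb : N → ℤ) (k : N → N → ℤ) (x y : N) : ℤ := 2 * k x y - kb x - kb y

variable (kb : N → ℤ) (k : N → N → ℤ)

theorem rho_self (hdiag : ∀ x : N, k x x = kb x) (x : N) : rho kb k x x = 0 := by
  simp only [rho, hdiag]
  ring

theorem rho_nonneg (hge : ∀ x y : N, max (kb x) (kb y) ≤ k x y) (x y : N) :
    0 ≤ rho kb k x y := by
  have h := hge x y
  rw [max_le_iff] at h
  unfold rho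
  omega

theorem rho_comm (hsymm : ∀ x y : N, k x y = k y x) (x y : N) :
    rho kb k x y = rho kb k y x := by
  simp only [rho, hsymm x y]
  ring

theorem rho_four_point (hsymm : ∀ x y : N, k x y = k y x)
    (hultra : ∀ x y z : N, k x z ≤ max (k x y) (k y z)) (w x y z : N) :
    rho kb k w x + rho kb k y z ≤
      max (rho kb k w y + rho kb k x z) (rho kb k w z + rho kb k x y) := by
  have h := four_point_of_le_max k hsymm hultra w x y z
  simp only [rho, le_max_iff] at *
  omega

theorem rho_triangle (hsymm : ∀ x y : N, k x y = k y x) (hdiag : ∀ x : N, k x x = kb x)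
    (hultra : ∀ x y z : N, k x z ≤ max (k x y) (k y z)) (x y z : N) :
    rho kb k x z ≤ rho kb k x y + rho kb k y z := by
  have h := rho_four_point kb k hsymm hultra x z y y
  rw [rho_self kb k hdiag, rho_comm kb k hsymm z y, max_self, add_zero] at h
  exact h

end

theorem stmt_10_general {N : Type*} (kb : N → ℤ) (k : N → N → ℤ)
    (hsymm : ∀ x y : N, k x y = k y x)
    (hge : ∀ x y : N, max (kb x) (kb y) ≤ k x y)
    (hdiag : ∀ x : N, k x x = kb x)
    (hultra : ∀ x y z : N, k x z ≤ max (k x y) (k y z)) :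
    let ρ : N → N → ℤ := fun x y => 2 * k x y - kb x - kb y
    (∀ x : N, ρ x x = 0) ∧
    (∀ x y : N, 0 ≤ ρ x y) ∧
    (∀ x y : N, ρ x y = ρ y x) ∧
    (∀ x y z : N, ρ x z ≤ ρ x y + ρ y z) ∧
    (∀ w x y z : N, ρ w x + ρ y z ≤ max (ρ w y + ρ x z) (ρ w z + ρ x y)) :=
  ⟨rho_self kb k hdiag, rho_nonneg kb k hge, rho_comm kb k hsymm,
    rho_triangle kb k hsymm hdiag hultra, rho_four_point kb k hsymm hultra⟩

/-- From data `k_x` and a symmetric `k(·,·)` with `k(x,y) ≥ max{k_x,k_y}`,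
`k(x,x) = k_x`, and the ultrametric-type inequality, the quantity
`ρ(x,y) = 2k(x,y) − k_x − k_y` defines a metric satisfying the four-point
(0-hyperbolicity) condition. -/
theorem stmt_10 {N : Type*} (kb : N → ℤ) (k : N → N → ℤ)
    (hsymm : ∀ x y : N, k x y = k y x)
    (hge : ∀ x y : N, max (kb x) (kb y) ≤ k x y)
    (hdiag : ∀ x : N, k x x = kb x)
    (hultra : ∀ x y z : N, k x z ≤ max (k x y) (k y z))
    (hpos : ∀ x y : N, x ≠ y → 0 < 2 * k x y - kb x - kb y) :
    let ρ : N → N → ℤ := fun x y => 2 * k x y - kb x - kb y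
    (∀ x : N, ρ x x = 0) ∧
    (∀ x y : N, 0 ≤ ρ x y) ∧
    (∀ x y : N, ρ x y = ρ y x) ∧
    (∀ x y z : N, ρ x z ≤ ρ x y + ρ y z) ∧
    (∀ w x y z : N, ρ w x + ρ y z ≤ max (ρ w y + ρ x z) (ρ w z + ρ x y)) :=
  stmt_10_general kb k hsymm hge hdiag hultra
end

section
/- Let (Z, d_Z) be a bounded metric space. Then ρ_Z((z,h),(z',h')) := 2·log((d_Z(z,z') + max(h,h'))/√(h·h')) defines a metric on Z × (0, diam Z]. -/
/-- The Bonk–Schramm hyperbolic filling distance on `Z × (0, diam Z]`. -/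
noncomputable def hypDist {Z : Type*} [PseudoMetricSpace Z] (p q : Z × ℝ) : ℝ :=
  2 * Real.log ((dist p.1 q.1 + max p.2 q.2) / Real.sqrt (p.2 * q.2))

/-!
Write `R(p, q) = (d(z, z') + h ∨ h') / √(h h')`, so that `ρ = 2 log R`. Since `√(h h') ≤ h ∨ h'`,
with equality only when `h = h'`, we get `R ≥ 1`, with equality only when `p = q`.
The triangle inequality is the multiplicative one `R(p, r) ≤ R(p, q) R(q, r)`: as
`√(h₁h₂) √(h₂h₃) = h₂ √(h₁h₃)`, it reduces to
`(d₁₃ + h₁ ∨ h₃) h₂ ≤ (d₁₂ + h₁ ∨ h₂)(d₂₃ + h₂ ∨ h₃)`, which follows from `d₁₃ ≤ d₁₂ + d₂₃`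
and `h₂ ≤ h₁ ∨ h₂`, `h₂ ≤ h₂ ∨ h₃`.
-/

open Real

lemma Real.sqrt_mul_le_max {a b : ℝ} (ha : 0 ≤ a) (hb : 0 ≤ b) : √(a * b) ≤ max a b := by
  rw [sqrt_le_left (ha.trans (le_max_left a b)), sq]
  exact mul_le_mul (le_max_left a b) (le_max_right a b) hb (ha.trans (le_max_left a b))

lemma Real.sqrt_mul_lt_max {a b : ℝ} (ha : 0 < a) (hb : 0 < b) (hab : a ≠ b) :
    √(a * b) < max a b := by
  rw [sqrt_lt' (ha.trans_le (le_max_left a b))]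
  rcases hab.lt_or_gt with h | h
  · rw [max_eq_right h.le]; nlinarith
  · rw [max_eq_left h.le]; nlinarith

section HypDist

variable {Z : Type*}

noncomputable def hypRatio [PseudoMetricSpace Z] (p q : Z × ℝ) : ℝ :=
  (dist p.1 q.1 + max p.2 q.2) / √(p.2 * q.2)

lemma hypDist_eq_two_mul_log_hypRatio [PseudoMetricSpace Z] (p q : Z × ℝ) :
    hypDist p q = 2 * log (hypRatio p q) := rfl

lemma hypDist_comm [PseudoMetricSpace Z] (p q : Z × ℝ) : hypDist p q = hypDist q p := by
  simp only [hypDist, dist_comm, max_comm, mul_comm]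

lemma hypDist_self [PseudoMetricSpace Z] {p : Z × ℝ} (hp : 0 ≤ p.2) : hypDist p p = 0 := by
  simp [hypDist, sqrt_mul_self hp]

lemma one_le_hypRatio [PseudoMetricSpace Z] {p q : Z × ℝ} (hp : 0 < p.2) (hq : 0 < q.2) :
    1 ≤ hypRatio p q := by
  rw [hypRatio, one_le_div (sqrt_pos.2 (mul_pos hp hq))]
  linarith [sqrt_mul_le_max hp.le hq.le, dist_nonneg (x := p.1) (y := q.1)]

lemma one_lt_hypRatio_of_ne [MetricSpace Z] {p q : Z × ℝ} (hp : 0 < p.2) (hq : 0 < q.2)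
    (hpq : p ≠ q) : 1 < hypRatio p q := by
  rw [hypRatio, one_lt_div (sqrt_pos.2 (mul_pos hp hq))]
  by_cases hz : p.1 = q.1
  · have hh : p.2 ≠ q.2 := fun hh => hpq (Prod.ext hz hh)
    linarith [sqrt_mul_lt_max hp hq hh, dist_nonneg (x := p.1) (y := q.1)]
  · linarith [sqrt_mul_le_max hp.le hq.le, dist_pos.2 hz]

lemma hypDist_nonneg [PseudoMetricSpace Z] {p q : Z × ℝ} (hp : 0 < p.2) (hq : 0 < q.2) :
    0 ≤ hypDist p q := by
  rw [hypDist_eq_two_mul_log_hypRatio]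
  exact mul_nonneg zero_le_two (log_nonneg (one_le_hypRatio hp hq))

lemma hypDist_eq_zero_iff [MetricSpace Z] {p q : Z × ℝ} (hp : 0 < p.2) (hq : 0 < q.2) :
    hypDist p q = 0 ↔ p = q := by
  refine ⟨fun h => ?_, fun h => h ▸ hypDist_self hp.le⟩
  by_contra hpq
  have := log_pos (one_lt_hypRatio_of_ne hp hq hpq)
  rw [hypDist_eq_two_mul_log_hypRatio] at h
  linarith

lemma dist_add_max_mul_le [PseudoMetricSpace Z] (p q r : Z × ℝ) (hq : 0 ≤ q.2) :
    (dist p.1 r.1 + max p.2 r.2) * q.2 ≤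
      (dist p.1 q.1 + max p.2 q.2) * (dist q.1 r.1 + max q.2 r.2) := by
  set A := dist p.1 q.1 + max p.2 q.2
  set B := dist q.1 r.1 + max q.2 r.2
  have hqA : q.2 ≤ A := by linarith [dist_nonneg (x := p.1) (y := q.1), le_max_right p.2 q.2]
  have hqB : q.2 ≤ B := by linarith [dist_nonneg (x := q.1) (y := r.1), le_max_left q.2 r.2]
  have hd := dist_triangle p.1 q.1 r.1
  rcases le_total r.2 p.2 with h | h
  · have hA : dist p.1 r.1 + max p.2 r.2 ≤ A + dist q.1 r.1 := by
      rw [max_eq_left h]; linarith [le_max_left p.2 q.2]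
    calc (dist p.1 r.1 + max p.2 r.2) * q.2 ≤ A * q.2 + dist q.1 r.1 * q.2 := by nlinarith
      _ ≤ A * max q.2 r.2 + dist q.1 r.1 * A :=
        add_le_add (mul_le_mul_of_nonneg_left (le_max_left _ _) (hq.trans hqA))
          (mul_le_mul_of_nonneg_left hqA dist_nonneg)
      _ = A * B := by ring
  · have hB : dist p.1 r.1 + max p.2 r.2 ≤ dist p.1 q.1 + B := by
      rw [max_eq_right h]; linarith [le_max_right q.2 r.2]
    calc (dist p.1 r.1 + max p.2 r.2) * q.2 ≤ dist p.1 q.1 * q.2 + B * q.2 := by nlinarith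
      _ ≤ dist p.1 q.1 * B + B * max p.2 q.2 :=
        add_le_add (mul_le_mul_of_nonneg_left hqB dist_nonneg)
          (mul_le_mul_of_nonneg_left (le_max_right _ _) (hq.trans hqB))
      _ = A * B := by ring

lemma hypRatio_le_mul [PseudoMetricSpace Z] {p q r : Z × ℝ} (hp : 0 < p.2) (hq : 0 < q.2)
    (hr : 0 < r.2) : hypRatio p r ≤ hypRatio p q * hypRatio q r := by
  have hsqrt : √(p.2 * q.2) * √(q.2 * r.2) = q.2 * √(p.2 * r.2) := by
    rw [← sqrt_mul (mul_pos hp hq).le, show p.2 * q.2 * (q.2 * r.2) = q.2 ^ 2 * (p.2 * r.2) by ring,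
      sqrt_mul (sq_nonneg _), sqrt_sq hq.le]
  rw [hypRatio, hypRatio, hypRatio, div_mul_div_comm,
    div_le_div_iff₀ (sqrt_pos.2 (mul_pos hp hr)) (by positivity), hsqrt, ← mul_assoc]
  exact mul_le_mul_of_nonneg_right (dist_add_max_mul_le p q r hq.le) (sqrt_nonneg _)

lemma hypDist_triangle [PseudoMetricSpace Z] {p q r : Z × ℝ} (hp : 0 < p.2) (hq : 0 < q.2)
    (hr : 0 < r.2) : hypDist p r ≤ hypDist p q + hypDist q r := by
  have hpos {a b : Z × ℝ} (ha : 0 < a.2) (hb : 0 < b.2) : 0 < hypRatio a b :=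
    one_pos.trans_le (one_le_hypRatio ha hb)
  simp only [hypDist_eq_two_mul_log_hypRatio]
  rw [← mul_add, ← log_mul (hpos hp hq).ne' (hpos hq hr).ne']
  gcongr
  · exact hpos hp hr
  · exact hypRatio_le_mul hp hq hr

end HypDist

theorem stmt_11_general {Z : Type*} [MetricSpace Z] :
    (∀ p q : Z × ℝ, p.2 ∈ Set.Ioc 0 (Metric.diam (Set.univ : Set Z)) →
      q.2 ∈ Set.Ioc 0 (Metric.diam (Set.univ : Set Z)) → hypDist p q = hypDist q p) ∧
    (∀ p q : Z × ℝ, p.2 ∈ Set.Ioc 0 (Metric.diam (Set.univ : Set Z)) →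
      q.2 ∈ Set.Ioc 0 (Metric.diam (Set.univ : Set Z)) → 0 ≤ hypDist p q) ∧
    (∀ p q : Z × ℝ, p.2 ∈ Set.Ioc 0 (Metric.diam (Set.univ : Set Z)) →
      q.2 ∈ Set.Ioc 0 (Metric.diam (Set.univ : Set Z)) → (hypDist p q = 0 ↔ p = q)) ∧
    (∀ p q r : Z × ℝ, p.2 ∈ Set.Ioc 0 (Metric.diam (Set.univ : Set Z)) →
      q.2 ∈ Set.Ioc 0 (Metric.diam (Set.univ : Set Z)) →
      r.2 ∈ Set.Ioc 0 (Metric.diam (Set.univ : Set Z)) →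
      hypDist p r ≤ hypDist p q + hypDist q r) :=
  ⟨fun p q _ _ => hypDist_comm p q,
    fun _ _ hp hq => hypDist_nonneg hp.1 hq.1,
    fun _ _ hp hq => hypDist_eq_zero_iff hp.1 hq.1,
    fun _ _ _ hp hq hr => hypDist_triangle hp.1 hq.1 hr.1⟩

/-- For a bounded metric space `Z`, `ρ_Z((z,h),(z',h')) = 2 log((d(z,z') + h∨h')/√(hh'))`
is a metric on `Z × (0, diam Z]`. -/
theorem stmt_11 {Z : Type*} [MetricSpace Z] [Nonempty Z]
    (hbd : Bornology.IsBounded (Set.univ : Set Z))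
    (hΔ : 0 < Metric.diam (Set.univ : Set Z)) :
    (∀ p q : Z × ℝ, p.2 ∈ Set.Ioc 0 (Metric.diam (Set.univ : Set Z)) →
      q.2 ∈ Set.Ioc 0 (Metric.diam (Set.univ : Set Z)) → hypDist p q = hypDist q p) ∧
    (∀ p q : Z × ℝ, p.2 ∈ Set.Ioc 0 (Metric.diam (Set.univ : Set Z)) →
      q.2 ∈ Set.Ioc 0 (Metric.diam (Set.univ : Set Z)) → 0 ≤ hypDist p q) ∧
    (∀ p q : Z × ℝ, p.2 ∈ Set.Ioc 0 (Metric.diam (Set.univ : Set Z)) →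
      q.2 ∈ Set.Ioc 0 (Metric.diam (Set.univ : Set Z)) → (hypDist p q = 0 ↔ p = q)) ∧
    (∀ p q r : Z × ℝ, p.2 ∈ Set.Ioc 0 (Metric.diam (Set.univ : Set Z)) →
      q.2 ∈ Set.Ioc 0 (Metric.diam (Set.univ : Set Z)) →
      r.2 ∈ Set.Ioc 0 (Metric.diam (Set.univ : Set Z)) →
      hypDist p r ≤ hypDist p q + hypDist q r) :=
  stmt_11_general
end

section
/- Let (X,d_X) and (Y,d_Y) be bounded metric spaces with diam X ≤ diam Y, and φ : X → Y a map with d_Y(φ(x), φ(x')) ≥ d_X(x, x') for all x, x'. Then the induced map Hyp(φ)(x,h) := (φ(x), h) from (X × (0, diam X], ρ_X) to (Y × (0, diam Y], ρ_Y) is noncontractive: ρ_Y(Hyp(φ)(x,h), Hyp(φ)(x',h')) ≥ ρ_X((x,h),(x',h')). -/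
theorem hypDist_le_hypDist_of_dist_le {Z W : Type*} [PseudoMetricSpace Z] [PseudoMetricSpace W]
    {z z' : Z} {w w' : W} {h h' : ℝ} (hh : 0 < h) (hh' : 0 < h')
    (hd : dist z z' ≤ dist w w') :
    hypDist ((z, h) : Z × ℝ) (z', h') ≤ hypDist ((w, h) : W × ℝ) (w', h') := by
  unfold hypDist
  gcongr

theorem stmt_12_general {X Y : Type*} [MetricSpace X] [MetricSpace Y]
    (φ : X → Y) (hφ : ∀ x x' : X, dist x x' ≤ dist (φ x) (φ x')) :
    ∀ (x x' : X) (h h' : ℝ), h ∈ Set.Ioc 0 (Metric.diam (Set.univ : Set X)) →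
      h' ∈ Set.Ioc 0 (Metric.diam (Set.univ : Set X)) →
      hypDist ((x, h) : X × ℝ) (x', h') ≤ hypDist ((φ x, h) : Y × ℝ) (φ x', h') :=
  fun x x' _ _ hh hh' => hypDist_le_hypDist_of_dist_le hh.1 hh'.1 (hφ x x')

/-- A noncontractive map `φ : X → Y` between bounded metric spaces with
`diam X ≤ diam Y` induces a noncontractive map `Hyp(φ)` between hyperbolic fillings. -/
theorem stmt_12 {X Y : Type*} [MetricSpace X] [MetricSpace Y]
    (hbX : Bornology.IsBounded (Set.univ : Set X))
    (hbY : Bornology.IsBounded (Set.univ : Set Y))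
    (hΔ : Metric.diam (Set.univ : Set X) ≤ Metric.diam (Set.univ : Set Y))
    (φ : X → Y) (hφ : ∀ x x' : X, dist x x' ≤ dist (φ x) (φ x')) :
    ∀ (x x' : X) (h h' : ℝ), h ∈ Set.Ioc 0 (Metric.diam (Set.univ : Set X)) →
      h' ∈ Set.Ioc 0 (Metric.diam (Set.univ : Set X)) →
      hypDist ((x, h) : X × ℝ) (x', h') ≤ hypDist ((φ x, h) : Y × ℝ) (φ x', h') :=
  stmt_12_general φ hφ
end

section
/- Let Y be a pointed metric space, M ⊆ Y a closed subset containing the basepoint, and K < ∞. Suppose there is a map y ↦ μ_y from Y into the closed convex hull of {δ_m : m ∈ M} inside the Lipschitz free space F(M), such that μ_m = δ_m for m ∈ M and ‖μ_y − μ_z‖ ≤ K·d(y,z) for all y, z ∈ Y. Then E : Lip_0(M) → Lip_0(Y) defined by E(f)(y) := ⟨f, μ_y⟩ is a linear extension operator with ‖E(f)‖_{Lip} ≤ K‖f‖_{Lip} and ‖E(f)‖_∞ ≤ ‖f‖_∞ for all f ∈ Lip_0(M). -/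
open scoped NNReal

/-- A convex `K`-random projection `y ↦ μ_y` of `Y` onto a closed subset `M` containing
the basepoint induces a linear extension operator `E(f)(y) = ⟨f, μ_y⟩` from `Lip_0(M)`
to `Lip_0(Y)` that is `K`-Lipschitz-bounded and `1`-uniform-bounded. Here elements of
the free space `F(M)` are encoded as linear functionals on functions `M → ℝ`, with the
free-space norm conditions expressed via the duality with `1`-Lipschitz functions
vanishing at the basepoint. -/
theorem stmt_19 {Y : Type*} [MetricSpace Y] (y₀ : Y) (M : Set Y)
    (hM : IsClosed M) (hy₀ : y₀ ∈ M) (K : ℝ) (hK : 0 ≤ K)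
    (μ : Y → ((M → ℝ) →ₗ[ℝ] ℝ))
    -- `μ_m = δ_m` for `m ∈ M`
    (hδ : ∀ (m : M) (f : M → ℝ), μ (m : Y) f = f m)
    -- `μ_y` lies in the closed convex hull of `δ(M)` inside `F(M)`
    (hconv : ∀ y : Y, ∀ ε : ℝ, 0 < ε → ∃ (s : Finset M) (c : M → ℝ),
      (∀ m ∈ s, 0 ≤ c m) ∧ (∑ m ∈ s, c m = 1) ∧
      ∀ f : M → ℝ, LipschitzWith 1 f → f ⟨y₀, hy₀⟩ = 0 →
        |μ y f - ∑ m ∈ s, c m * f m| ≤ ε)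
    -- `‖μ_y − μ_z‖_{F(M)} ≤ K·d(y,z)`
    (hLip : ∀ y z : Y, ∀ f : M → ℝ, LipschitzWith 1 f → f ⟨y₀, hy₀⟩ = 0 →
      |μ y f - μ z f| ≤ K * dist y z) :
    -- `E` is an extension operator:
    (∀ (f : M → ℝ) (m : M), μ (m : Y) f = f m) ∧
    -- `E` is `K`-Lipschitz-bounded: `Lip(E f) ≤ K·Lip(f)`
    (∀ (f : M → ℝ) (L : ℝ≥0), LipschitzWith L f → f ⟨y₀, hy₀⟩ = 0 →
      LipschitzWith (K.toNNReal * L) (fun y : Y => μ y f)) ∧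
    -- `E` is `1`-uniform-bounded: `‖E f‖_∞ ≤ ‖f‖_∞`
    (∀ (f : M → ℝ) (L : ℝ≥0), LipschitzWith L f → f ⟨y₀, hy₀⟩ = 0 →
      ∀ B : ℝ, (∀ m : M, |f m| ≤ B) → ∀ y : Y, |μ y f| ≤ B) := by

  -- Auxiliary: a `0`-Lipschitz function vanishing at the basepoint is zero.
  have key0 : ∀ f : M → ℝ, LipschitzWith 0 f → f ⟨y₀, hy₀⟩ = 0 → f = 0 := by
    intro f hf hf0
    funext m
    have h := hf.dist_le_mul m ⟨y₀, hy₀⟩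
    simp only [NNReal.coe_zero, zero_mul, dist_le_zero] at h
    simp [h, hf0]
  -- Auxiliary: rescaling an `L`-Lipschitz function (L ≠ 0) to a 1-Lipschitz one.
  have keyg : ∀ (f : M → ℝ) (L : ℝ≥0), L ≠ 0 → LipschitzWith L f → f ⟨y₀, hy₀⟩ = 0 →
      ∃ g : M → ℝ, LipschitzWith 1 g ∧ g ⟨y₀, hy₀⟩ = 0 ∧ f = (L : ℝ) • g := by
    intro f L hL hf hf0
    refine ⟨fun m => (L : ℝ)⁻¹ * f m, ?_, by simp [hf0], ?_⟩
    · rw [lipschitzWith_iff_dist_le_mul]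
      intro a b
      have hLpos : (0:ℝ) < (L:ℝ) := by positivity
      have := hf.dist_le_mul a b
      rw [Real.dist_eq] at this ⊢
      have : |(L:ℝ)⁻¹ * f a - (L:ℝ)⁻¹ * f b| = (L:ℝ)⁻¹ * |f a - f b| := by
        rw [← mul_sub, abs_mul, abs_of_nonneg (by positivity)]
      rw [this]
      calc (L:ℝ)⁻¹ * |f a - f b| ≤ (L:ℝ)⁻¹ * ((L:ℝ) * dist a b) := by
              apply mul_le_mul_of_nonneg_left _ (by positivity)
              simpa [Real.dist_eq] using hf.dist_le_mul a b
        _ = dist a b := by field_simp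
        _ = 1 * dist a b := (one_mul _).symm
    · funext m
      simp only [Pi.smul_apply, smul_eq_mul]
      rw [← mul_assoc, mul_inv_cancel₀ (by positivity), one_mul]
  refine ⟨fun f m => hδ m f, ?_, ?_⟩
  · intro f L hf hf0
    rcases eq_or_ne L 0 with rfl | hL
    · have hf' : f = 0 := key0 f hf hf0
      subst hf'
      simp only [map_zero]
      exact LipschitzWith.const' 0
    · obtain ⟨g, hg1, hg0, hfg⟩ := keyg f L hL hf hf0
      rw [lipschitzWith_iff_dist_le_mul]
      intro y z
      have h1 := hLip y z g hg1 hg0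
      have h2 : ∀ w : Y, μ w f = (L:ℝ) * μ w g := by
        intro w; rw [hfg, map_smul]; rfl
      rw [Real.dist_eq, h2, h2, ← mul_sub, abs_mul, abs_of_nonneg L.coe_nonneg]
      calc (L:ℝ) * |μ y g - μ z g| ≤ (L:ℝ) * (K * dist y z) :=
            mul_le_mul_of_nonneg_left h1 L.coe_nonneg
        _ = ((K.toNNReal * L : ℝ≥0) : ℝ) * dist y z := by
            push_cast [Real.coe_toNNReal _ hK]; ring
  · intro f L hf hf0 B hB y
    rcases eq_or_ne L 0 with rfl | hL
    · have hf' : f = 0 := key0 f hf hf0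
      subst hf'
      simp only [map_zero, abs_zero]
      exact le_trans (abs_nonneg _) (hB ⟨y₀, hy₀⟩)
    · obtain ⟨g, hg1, hg0, hfg⟩ := keyg f L hL hf hf0
      have hLpos : (0:ℝ) < (L:ℝ) := by positivity
      have h2 : μ y f = (L:ℝ) * μ y g := by rw [hfg, map_smul]; rfl
      refine le_of_forall_pos_le_add ?_
      intro ε hε
      obtain ⟨s, c, hc0, hc1, hbound⟩ := hconv y (ε / L) (by positivity)
      have hb := hbound g hg1 hg0
      have hsum : ∑ m ∈ s, c m * f m = (L:ℝ) * ∑ m ∈ s, c m * g m := by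
        rw [Finset.mul_sum]
        refine Finset.sum_congr rfl fun m _ => ?_
        rw [hfg]; simp [Pi.smul_apply, smul_eq_mul]; ring
      have hmain : |μ y f - ∑ m ∈ s, c m * f m| ≤ ε := by
        rw [h2, hsum, ← mul_sub, abs_mul, abs_of_nonneg hLpos.le]
        calc (L:ℝ) * |μ y g - ∑ m ∈ s, c m * g m| ≤ (L:ℝ) * (ε / L) :=
              mul_le_mul_of_nonneg_left hb hLpos.le
          _ = ε := by field_simp
      have hsb : |∑ m ∈ s, c m * f m| ≤ B := by
        calc |∑ m ∈ s, c m * f m| ≤ ∑ m ∈ s, |c m * f m| := Finset.abs_sum_le_sum_abs _ _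
          _ ≤ ∑ m ∈ s, c m * B := by
              refine Finset.sum_le_sum fun m hm => ?_
              rw [abs_mul, abs_of_nonneg (hc0 m hm)]
              exact mul_le_mul_of_nonneg_left (hB m) (hc0 m hm)
          _ = B := by rw [← Finset.sum_mul, hc1, one_mul]
      calc |μ y f| ≤ |∑ m ∈ s, c m * f m| + |μ y f - ∑ m ∈ s, c m * f m| := by
            have := abs_add_le (∑ m ∈ s, c m * f m) (μ y f - ∑ m ∈ s, c m * f m)
            simpa using this
        _ ≤ B + ε := add_le_add hsb hmain
end
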